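/- arXiv:1601.00410 — 3 statements merged into one kernel-verified Lean document; each statement's English description precedes it below -/
import Mathlib

section
/- With p_i = 2·4^{−i}·(2i−2)!/((i−1)!·(i+1)!) for integers i ≥ 1, the series ∑_{i=1}^{∞} p_i converges and equals 1/3. -/
/-- The peeling probabilities `p_i = 2 · 4⁻ⁱ · (2i−2)! / ((i−1)!·(i+1)!)` of the
half-plane UIPT, for `i ≥ 1`. -/
noncomputable def peelProb (i : ℕ) : ℝ :=
  2 * (4 : ℝ)⁻¹ ^ i * (Nat.factorial (2 * i - 2)) /
    ((Nat.factorial (i - 1)) * (Nat.factorial (i + 1)))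

noncomputable def peelRem (n : ℕ) : ℝ := (catalan n) / (3 * 4 ^ n)

lemma centralBinom_le_four_pow (n : ℕ) : n.centralBinom ≤ 4 ^ n := by
  calc n.centralBinom = (2 * n).choose n := rfl
    _ ≤ ∑ i ∈ Finset.range (2 * n + 1), (2 * n).choose i :=
        Finset.single_le_sum (fun i _ => Nat.zero_le _)
          (Finset.mem_range.mpr (by omega))
    _ = 2 ^ (2 * n) := Nat.sum_range_choose (2 * n)
    _ = 4 ^ n := by rw [pow_mul]; norm_num

lemma peelProb_eq (i : ℕ) : peelProb (i + 1) = peelRem i - peelRem (i + 1) := by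
  have h1 : ((i:ℝ)+1) * (i+1).centralBinom = 2*(2*(i:ℝ)+1) * i.centralBinom := by
    exact_mod_cast Nat.succ_mul_centralBinom_succ i
  have h2 : ((i:ℝ)+1) * catalan i = i.centralBinom := by
    exact_mod_cast succ_mul_catalan_eq_centralBinom i
  have h3 : ((i:ℝ)+1+1) * catalan (i+1) = (i+1).centralBinom := by
    exact_mod_cast succ_mul_catalan_eq_centralBinom (i+1)
  have hi : ((i:ℝ)+1) ≠ 0 := by positivity
  have hc : ((i:ℝ)+1+1) * catalan (i+1) = 2*(2*(i:ℝ)+1) * catalan i := by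
    apply mul_left_cancel₀ hi
    linear_combination ((i:ℝ)+1)*h3 + h1 - 2*(2*(i:ℝ)+1)*h2
  have hfact : ((2 * i).factorial : ℝ) = ((i:ℝ) + 1) * catalan i * i.factorial * i.factorial := by
    have h := Nat.choose_mul_factorial_mul_factorial (Nat.le_mul_of_pos_left i (by norm_num) : i ≤ 2 * i)
    have h2' := succ_mul_catalan_eq_centralBinom i
    rw [Nat.centralBinom] at h2'
    rw [show 2 * i - i = i by omega] at h
    push_cast [← h, ← h2']
    ring
  simp only [peelProb, peelRem, show 2 * (i + 1) - 2 = 2 * i by omega,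
    show i + 1 - 1 = i from rfl]
  rw [hfact, Nat.factorial_succ (i+1), Nat.factorial_succ i]
  have hf : (0:ℝ) < i.factorial := by positivity
  have h4 : (0:ℝ) < 4 ^ i := by positivity
  push_cast
  rw [inv_pow]
  have hc' : (catalan (i+1) : ℝ) = 2*(2*(i:ℝ)+1) * catalan i / ((i:ℝ)+1+1) := by
    rw [← hc]; field_simp
  rw [hc']
  field_simp
  ring

/-- The series `∑_{i ≥ 1} p_i` converges and equals `1/3`. -/
theorem peelProb_sum : HasSum (fun i : ℕ => peelProb (i + 1)) (1 / 3) := by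
  have hnn : ∀ i : ℕ, 0 ≤ peelProb (i + 1) := by
    intro i; unfold peelProb; positivity
  rw [hasSum_iff_tendsto_nat_of_nonneg hnn]
  have hsum : ∀ n, ∑ i ∈ Finset.range n, peelProb (i + 1) = peelRem 0 - peelRem n := by
    intro n
    simp only [peelProb_eq]
    exact Finset.sum_range_sub' peelRem n
  simp only [hsum]
  have h0 : peelRem 0 = 1 / 3 := by simp [peelRem, catalan_zero]
  rw [h0]
  have : Filter.Tendsto peelRem Filter.atTop (nhds 0) := by
    have hb : ∀ n : ℕ, peelRem n ≤ 1 / ((n:ℝ) + 1) := by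
      intro n
      have h2 := succ_mul_catalan_eq_centralBinom n
      have hcb := centralBinom_le_four_pow n
      have : ((n:ℝ) + 1) * catalan n ≤ 4 ^ n := by
        have : ((n + 1) * catalan n : ℕ) ≤ 4 ^ n := h2 ▸ hcb
        exact_mod_cast this
      rw [peelRem, div_le_div_iff₀ (by positivity) (by positivity)]
      nlinarith [pow_pos (show (0:ℝ) < 4 by norm_num) n, Nat.cast_nonneg (α := ℝ) (catalan n)]
    have hnn' : ∀ n, 0 ≤ peelRem n := fun n => by unfold peelRem; positivity
    exact squeeze_zero hnn' hb tendsto_one_div_add_atTop_nhds_zero_nat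
  simpa using (tendsto_const_nhds.sub this)
end

section
/- With p_i = 2·4^{−i}·(2i−2)!/((i−1)!·(i+1)!) for integers i ≥ 1, the series ∑_{i=1}^{∞} i·p_i converges and equals 2/3. Consequently the integer-valued random variable ξ with distribution P(ξ = 1) = 2/3, P(ξ = 0) = 1/6, and P(ξ = −i) = p_i/2 for each integer i ≥ 1 has expectation 𝔼ξ = 1/3. -/
open MeasureTheory

/-!
Writing `a n = (2n choose n) / 4ⁿ`, one has `p (i + 1) = a i / (2 (i + 1) (i + 2))`, and the
recursion `a (n + 1) = a n · (2n + 1) / (2n + 2)` makes both `p (i + 1)` and `(i + 1) p (i + 1)`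
telescope, against `2/3 (a n - a (n + 1))` and `(a n + 2 a (n + 1)) / 3` respectively. Since
`a n ^ 2 ≤ 1 / (2n + 1)`, `a n → 0`, so `∑ p_i = 1/3` and `∑ i p_i = 2/3`. The law of `ξ` is then
determined: its listed masses already add up to `1`, and `𝔼ξ = 2/3 - (1/2) ∑ i p_i = 1/3`.
-/

open Filter Topology

-- `HasSum` is unconditional, so convergent partial sums only suffice for nonnegative terms.
theorem hasSum_of_eq_sub_succ {u f : ℕ → ℝ} {l : ℝ} (hu : 0 ≤ u)
    (huf : ∀ n, u n = f n - f (n + 1)) (hf : Tendsto f atTop (𝓝 l)) : HasSum u (f 0 - l) := by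
  rw [hasSum_iff_tendsto_nat_of_nonneg hu]
  simp_rw [huf, Finset.sum_range_sub']
  exact tendsto_const_nhds.sub hf

noncomputable def centralBinomRatio (n : ℕ) : ℝ := (n.centralBinom : ℝ) / 4 ^ n

theorem centralBinomRatio_pos (n : ℕ) : 0 < centralBinomRatio n :=
  div_pos (mod_cast n.centralBinom_pos) (by positivity)

@[simp]
theorem centralBinomRatio_zero : centralBinomRatio 0 = 1 := by simp [centralBinomRatio]

theorem centralBinomRatio_succ (n : ℕ) :
    centralBinomRatio (n + 1) = centralBinomRatio n * (2 * n + 1) / (2 * n + 2) := by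
  have h : ((n : ℝ) + 1) * (n + 1).centralBinom = 2 * (2 * n + 1) * n.centralBinom := by
    exact_mod_cast Nat.succ_mul_centralBinom_succ n
  rw [centralBinomRatio, centralBinomRatio, pow_succ, eq_div_iff (by positivity)]
  field_simp
  linear_combination 2 * h

theorem centralBinomRatio_sq_le (n : ℕ) : centralBinomRatio n ^ 2 ≤ 1 / (2 * n + 1) := by
  induction n with
  | zero => simp
  | succ n ih =>
    rw [le_div_iff₀ (by positivity)] at ih
    rw [centralBinomRatio_succ, div_pow, le_div_iff₀ (by positivity), div_mul_eq_mul_div,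
      div_le_one (by positivity)]
    push_cast
    nlinarith [sq_nonneg (centralBinomRatio n)]

theorem tendsto_centralBinomRatio : Tendsto centralBinomRatio atTop (𝓝 0) := by
  have hsq : Tendsto (fun n => centralBinomRatio n ^ 2) atTop (𝓝 0) := by
    refine squeeze_zero (fun n => sq_nonneg _) (fun n => (centralBinomRatio_sq_le n).trans ?_)
      tendsto_one_div_add_atTop_nhds_zero_nat
    gcongr
    linarith [n.cast_nonneg (α := ℝ)]
  simpa [Real.sqrt_sq (centralBinomRatio_pos _).le] using hsq.sqrt

theorem peelProb_succ (i : ℕ) :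
    peelProb (i + 1) = centralBinomRatio i / (2 * (i + 1) * (i + 2)) := by
  have hfac : ((2 * i).factorial : ℝ) = i.centralBinom * i.factorial * i.factorial := by
    rw [Nat.centralBinom_eq_two_mul_choose, two_mul]
    exact_mod_cast (Nat.add_choose_mul_factorial_mul_factorial i i).symm
  have hfac' : ((i + 2).factorial : ℝ) = (i + 2) * (i + 1) * i.factorial := by
    push_cast [Nat.factorial_succ]
    ring
  rw [peelProb, show 2 * (i + 1) - 2 = 2 * i by omega, Nat.add_sub_cancel, hfac, hfac',
    centralBinomRatio, inv_pow]
  field_simp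
  ring

theorem peelProb_succ_pos (i : ℕ) : 0 < peelProb (i + 1) := by
  rw [peelProb_succ]
  have := centralBinomRatio_pos i
  positivity

theorem peelProb_succ_eq_sub (i : ℕ) :
    peelProb (i + 1) = 2 / 3 * (centralBinomRatio i - centralBinomRatio (i + 1)) -
      2 / 3 * (centralBinomRatio (i + 1) - centralBinomRatio (i + 2)) := by
  rw [peelProb_succ, centralBinomRatio_succ (i + 1), centralBinomRatio_succ i]
  push_cast
  field_simp
  ring

theorem succ_mul_peelProb_succ_eq_sub (i : ℕ) :
    (i + 1 : ℕ) * peelProb (i + 1) =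
      (centralBinomRatio i + 2 * centralBinomRatio (i + 1)) / 3 -
        (centralBinomRatio (i + 1) + 2 * centralBinomRatio (i + 2)) / 3 := by
  rw [peelProb_succ, centralBinomRatio_succ (i + 1), centralBinomRatio_succ i]
  push_cast
  field_simp
  ring

theorem hasSum_peelProb : HasSum (fun i => peelProb (i + 1)) (1 / 3) := by
  have h := hasSum_of_eq_sub_succ (fun i => (peelProb_succ_pos i).le) peelProb_succ_eq_sub
    ((tendsto_centralBinomRatio.sub
      (tendsto_centralBinomRatio.comp (tendsto_add_atTop_nat 1))).const_mul (2 / 3))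
  norm_num [centralBinomRatio_succ] at h
  exact h

theorem hasSum_succ_mul_peelProb :
    HasSum (fun i : ℕ => ((i + 1 : ℕ) : ℝ) * peelProb (i + 1)) (2 / 3) := by
  have h := hasSum_of_eq_sub_succ (fun i => by have := peelProb_succ_pos i; positivity)
    succ_mul_peelProb_succ_eq_sub
    ((tendsto_centralBinomRatio.add
      ((tendsto_centralBinomRatio.comp (tendsto_add_atTop_nat 1)).const_mul 2)).div_const 3)
  norm_num [centralBinomRatio_succ] at h
  exact_mod_cast h

section CountableLaw

variable {α : Type*} [MeasurableSpace α] [MeasurableSingletonClass α] [Countable α]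

theorem measure_singleton_eq_ofReal_of_hasSum_one {ν : Measure α} [IsProbabilityMeasure ν]
    {w : α → ℝ} (hw : 0 ≤ w) (hsum : HasSum w 1)
    (h : ∀ a, w a ≠ 0 → ν {a} = ENNReal.ofReal (w a)) (a : α) :
    ν {a} = ENNReal.ofReal (w a) := by
  have hle : ∀ b, ENNReal.ofReal (w b) ≤ ν {b} := fun b => by
    by_cases hb : w b = 0
    · simp [hb]
    · exact (h b hb).ge
  have hw_tsum : ∑' b, ENNReal.ofReal (w b) = 1 := by
    rw [← ENNReal.ofReal_tsum_of_nonneg hw hsum.summable, hsum.tsum_eq, ENNReal.ofReal_one]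
  have hν_tsum : ∑' b, ν {b} = 1 := by
    simpa using Measure.tsum_indicator_apply_singleton ν _ MeasurableSet.univ
  refine ((hle a).lt_or_eq.resolve_left fun hlt => ?_).symm
  exact (ENNReal.tsum_lt_tsum (by simp [hw_tsum]) hle hlt).ne (hw_tsum.trans hν_tsum.symm)

theorem integrable_and_integral_eq_of_hasSum {ν : Measure α} {w : α → ℝ} (hw : 0 ≤ w)
    (hν : ∀ a, ν {a} = ENNReal.ofReal (w a)) {f : α → ℝ} {m : ℝ}
    (hf : HasSum (fun a => f a * w a) m) : Integrable f ν ∧ ∫ a, f a ∂ν = m := by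
  have habs : HasSum (fun a => |f a| * w a) (∑' a, |f a| * w a) := by
    refine Summable.hasSum ?_
    simpa [abs_mul, abs_of_nonneg (hw _)] using hf.summable.abs
  have hint : Integrable f ν := by
    refine ⟨(measurable_of_countable f).aestronglyMeasurable, ?_⟩
    rw [HasFiniteIntegral, lintegral_countable']
    simp_rw [hν, ← ofReal_norm, ← ENNReal.ofReal_mul (norm_nonneg _), Real.norm_eq_abs]
    rw [← ENNReal.ofReal_tsum_of_nonneg (fun a => mul_nonneg (abs_nonneg _) (hw a)) habs.summable]
    exact ENNReal.ofReal_lt_top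
  refine ⟨hint, ?_⟩
  rw [integral_countable hint, ← hf.tsum_eq]
  congr 1 with a
  rw [measureReal_def, hν, ENNReal.toReal_ofReal (hw a), smul_eq_mul, mul_comm]

theorem integrable_comp_and_integral_comp_eq_of_hasSum {Ω : Type*} [MeasurableSpace Ω]
    {μ : Measure Ω} [IsProbabilityMeasure μ] {ξ : Ω → α} (hξ : Measurable ξ) {w : α → ℝ}
    (hw : 0 ≤ w) (hsum : HasSum w 1)
    (hlaw : ∀ a, w a ≠ 0 → μ {ω | ξ ω = a} = ENNReal.ofReal (w a)) {f : α → ℝ} {m : ℝ}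
    (hf : HasSum (fun a => f a * w a) m) :
    Integrable (fun ω => f (ξ ω)) μ ∧ ∫ ω, f (ξ ω) ∂μ = m := by
  have := Measure.isProbabilityMeasure_map (μ := μ) hξ.aemeasurable
  have hν := measure_singleton_eq_ofReal_of_hasSum_one hw hsum fun a ha => by
    rw [Measure.map_apply hξ (measurableSet_singleton a)]
    exact hlaw a ha
  obtain ⟨hint, hmean⟩ := integrable_and_integral_eq_of_hasSum hw hν hf
  have hfm := (measurable_of_countable f).aestronglyMeasurable (μ := μ.map ξ)
  exact ⟨(integrable_map_measure hfm hξ.aemeasurable).1 hint,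
    (integral_map hξ.aemeasurable hfm).symm.trans hmean⟩

end CountableLaw

noncomputable def peelStepLaw : ℤ → ℝ
  | .ofNat 0 => 1 / 6
  | .ofNat 1 => 2 / 3
  | .ofNat (_ + 2) => 0
  | .negSucc i => peelProb (i + 1) / 2

theorem peelStepLaw_nonneg : 0 ≤ peelStepLaw
  | .ofNat 0 | .ofNat 1 | .ofNat (_ + 2) => by norm_num [peelStepLaw]
  | .negSucc i => div_nonneg (peelProb_succ_pos i).le zero_le_two

theorem hasSum_peelStepLaw : HasSum peelStepLaw 1 := by
  have hnat : HasSum (fun n : ℕ => peelStepLaw n) (∑ n ∈ Finset.range 2, peelStepLaw n) :=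
    hasSum_sum_of_ne_finset_zero fun n hn => by
      obtain ⟨k, rfl⟩ : ∃ k, n = k + 2 := ⟨n - 2, by simp at hn; omega⟩
      rfl
  convert hnat.of_nat_of_neg_add_one (hasSum_peelProb.div_const 2) using 1
  norm_num [Finset.sum_range_succ, peelStepLaw]

theorem hasSum_mul_peelStepLaw : HasSum (fun z : ℤ => (z : ℝ) * peelStepLaw z) (1 / 3) := by
  have hnat : HasSum (fun n : ℕ => ((n : ℤ) : ℝ) * peelStepLaw n)
      (∑ n ∈ Finset.range 2, ((n : ℤ) : ℝ) * peelStepLaw n) :=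
    hasSum_sum_of_ne_finset_zero fun n hn => by
      obtain ⟨k, rfl⟩ : ∃ k, n = k + 2 := ⟨n - 2, by simp at hn; omega⟩
      exact mul_eq_zero_of_right _ rfl
  have hneg : HasSum (fun n : ℕ => ((-(n + 1) : ℤ) : ℝ) * peelStepLaw (-(n + 1)))
      (-((2 / 3) / 2)) := by
    have hterm : ∀ n : ℕ, ((-(n + 1) : ℤ) : ℝ) * peelStepLaw (-(n + 1)) =
        -(((n + 1 : ℕ) : ℝ) * peelProb (n + 1) / 2) := fun n => by
      rw [show -((n : ℤ) + 1) = Int.negSucc n from rfl, peelStepLaw]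
      push_cast
      ring
    simp_rw [hterm]
    exact (hasSum_succ_mul_peelProb.div_const 2).neg
  have hnat_sum : ∑ n ∈ Finset.range 2, ((n : ℤ) : ℝ) * peelStepLaw n = 2 / 3 := by
    simp [Finset.sum_range_succ, peelStepLaw]
  rw [hnat_sum] at hnat
  have h := HasSum.of_nat_of_neg_add_one (f := fun z : ℤ => (z : ℝ) * peelStepLaw z) hnat hneg
  norm_num at h
  exact h

/-- `∑_{i ≥ 1} i·p_i = 2/3`; consequently any integer-valued random variable `ξ` with
`P(ξ = 1) = 2/3`, `P(ξ = 0) = 1/6` and `P(ξ = −i) = p_i/2` for `i ≥ 1` is integrable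
with expectation `1/3`. -/
theorem peelProb_first_moment :
    HasSum (fun i : ℕ => ((i + 1 : ℕ) : ℝ) * peelProb (i + 1)) (2 / 3) ∧
    ∀ (Ω : Type) (_ : MeasurableSpace Ω) (μ : Measure Ω), IsProbabilityMeasure μ →
      ∀ (ξ : Ω → ℤ), Measurable ξ →
        μ {ω : Ω | ξ ω = 1} = ENNReal.ofReal (2 / 3) →
        μ {ω : Ω | ξ ω = 0} = ENNReal.ofReal (1 / 6) →
        (∀ i : ℕ, 1 ≤ i → μ {ω : Ω | ξ ω = -(i : ℤ)} = ENNReal.ofReal (peelProb i / 2)) →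
        Integrable (fun ω => (ξ ω : ℝ)) μ ∧ ∫ ω, (ξ ω : ℝ) ∂μ = 1 / 3 := by
  refine ⟨hasSum_succ_mul_peelProb, fun Ω _ μ _ ξ hξ h1 h0 hneg => ?_⟩
  refine integrable_comp_and_integral_comp_eq_of_hasSum hξ peelStepLaw_nonneg hasSum_peelStepLaw
    ?_ hasSum_mul_peelStepLaw
  rintro ((_ | _ | n) | i) hi
  · exact h0
  · exact h1
  · exact absurd rfl hi
  · exact hneg (i + 1) (Nat.le_add_left 1 i)
end

section
/- Let (ξ_n)_{n≥1} be independent, identically distributed, integrable, integer-valued random variables with ξ_1 ≤ 1 almost surely and μ := 𝔼[ξ_1] > 0. Let S_n = ξ_1 + ⋯ + ξ_n. Then the probability that S_n ≥ 1 for all n ≥ 1 equals μ. -/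
/-!
Because the increments are at most `1`, the running maximum `M_N = max_{k ≤ N} S_k` goes up by
exactly one at each strict ladder epoch and stays put otherwise, so `𝔼[M_N]` is the sum over
`n ≤ N` of the probabilities that `n` is a ladder epoch. Reversing the first `n` increments
preserves their joint law and turns "`n` is a ladder epoch" into "`S_1, …, S_n ≥ 1`", an event
whose probability decreases to `q = ℙ(S_n ≥ 1 for all n ≥ 1)`; by Cesàro, `𝔼[M_N] / N → q`.
On the other hand `M_N / N → μ` almost surely by the strong law, and `0 ≤ M_N ≤ N`, so
dominated convergence gives `𝔼[M_N] / N → μ`.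
-/

open MeasureTheory ProbabilityTheory Filter Finset Topology

def IsLadderEpoch {α : Type*} [Preorder α] (a : ℕ → α) (n : ℕ) : Prop := ∀ k < n, a k < a n

instance {α : Type*} [Preorder α] [DecidableLT α] (a : ℕ → α) :
    DecidablePred (IsLadderEpoch a) :=
  fun n => inferInstanceAs (Decidable (∀ k < n, a k < a n))

lemma isLadderEpoch_add_one_iff {α : Type*} [LinearOrder α] (a : ℕ → α) (n : ℕ) :
    IsLadderEpoch a (n + 1) ↔ partialSups a n < a (n + 1) := by
  rw [partialSups_iff_forall (· < a (n + 1)) sup_lt_iff]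
  simp only [IsLadderEpoch, Nat.lt_add_one_iff]

lemma partialSups_eq_card_isLadderEpoch (a : ℕ → ℤ) (h0 : a 0 = 0)
    (hstep : ∀ i, a (i + 1) ≤ a i + 1) (N : ℕ) :
    partialSups a N = #{n ∈ range N | IsLadderEpoch a (n + 1)} := by
  induction N with
  | zero => simp [h0]
  | succ N ih =>
    rw [← Order.succ_eq_add_one, partialSups_succ, Order.succ_eq_add_one, card_filter,
      sum_range_succ, ← card_filter, Nat.cast_add, ← ih]
    have hN := hstep N
    have hmax : a N ≤ partialSups a N := le_partialSups a N
    split_ifs with h <;> rw [isLadderEpoch_add_one_iff] at h <;> push_cast <;> omega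

lemma tendsto_partialSups_div {a : ℕ → ℝ} {μ : ℝ} (hμ : 0 ≤ μ)
    (h : Tendsto (fun n => a n / n) atTop (𝓝 μ)) :
    Tendsto (fun n => partialSups a n / n) atTop (𝓝 μ) := by
  rw [tendsto_order] at h ⊢
  refine ⟨fun b hb => ?_, fun b hb => ?_⟩
  · filter_upwards [h.1 b hb] with n hn
    exact hn.trans_le (div_le_div_of_nonneg_right (le_partialSups a n) n.cast_nonneg)
  · obtain ⟨K, hK⟩ := eventually_atTop.1 (h.2 b hb)
    have hb0 : 0 < b := hμ.trans_lt hb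
    filter_upwards [eventually_gt_atTop K,
      (tendsto_natCast_atTop_atTop.const_mul_atTop hb0).eventually_gt_atTop (partialSups a K)]
      with n hKn hbn
    rw [div_lt_iff₀ (by exact_mod_cast K.zero_le.trans_lt hKn),
      partialSups_iff_forall (· < b * n) sup_lt_iff]
    intro k hk
    rcases le_or_gt k K with hkK | hKk
    · exact (le_partialSups_of_le a hkK).trans_lt hbn
    · calc a k < b * k := by
            rw [← div_lt_iff₀ (by exact_mod_cast K.zero_le.trans_lt hKk)]; exact hK k hKk.le
        _ ≤ b * n := by gcongr

lemma sum_range_reflect_eq_sub {G : Type*} [AddCommGroup G] (x : ℕ → G) {j n : ℕ}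
    (hj : j < n) :
    ∑ i ∈ range (j + 1), x (n - 1 - i) = ∑ i ∈ range n, x i - ∑ i ∈ range (n - 1 - j), x i := by
  obtain ⟨m, rfl⟩ : ∃ m, n = m + (j + 1) := ⟨n - (j + 1), by omega⟩
  rw [show m + (j + 1) - 1 - j = m by omega, sum_range_add x m (j + 1), add_sub_cancel_left,
    ← sum_range_reflect]
  refine sum_congr rfl fun i hi => ?_
  rw [mem_range] at hi
  congr 1
  omega

lemma isLadderEpoch_partialSums_iff {G : Type*} [AddCommGroup G] [LinearOrder G]
    [IsOrderedAddMonoid G] (x : ℕ → G) (n : ℕ) :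
    IsLadderEpoch (fun k => ∑ i ∈ range k, x i) n ↔
      ∀ j < n, 0 < ∑ i ∈ range (j + 1), x (n - 1 - i) := by
  refine ⟨fun h j hj => ?_, fun h k hk => ?_⟩
  · rw [sum_range_reflect_eq_sub x hj, sub_pos]
    exact h _ (by omega)
  · have h' := h (n - 1 - k) (by omega)
    rwa [sum_range_reflect_eq_sub x (by omega), sub_pos,
      show n - 1 - (n - 1 - k) = k by omega] at h'

lemma identDistrib_comp_of_injective {Ω β : Type*} [MeasurableSpace Ω] [MeasurableSpace β]
    {P : Measure Ω} {ξ : ℕ → Ω → β} (hmeas : ∀ n, Measurable (ξ n)) (hindep : iIndepFun ξ P)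
    (hident : ∀ n, IdentDistrib (ξ n) (ξ 0) P P) {g : ℕ → ℕ} (hg : g.Injective) :
    IdentDistrib (fun ω i => ξ (g i) ω) (fun ω i => ξ i ω) P P where
  aemeasurable_fst := (measurable_pi_lambda _ fun i => hmeas (g i)).aemeasurable
  aemeasurable_snd := (measurable_pi_lambda _ hmeas).aemeasurable
  map_eq := by
    rw [(hindep.precomp hg).map_fun_eq_infinitePi_map (fun i => hmeas (g i)),
      hindep.map_fun_eq_infinitePi_map hmeas]
    simp_rw [(hident _).map_eq]

lemma tendsto_measureReal_forall_lt {Ω : Type*} [MeasurableSpace Ω] {P : Measure Ω}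
    [IsFiniteMeasure P] {p : ℕ → Ω → Prop} (hp : ∀ n, MeasurableSet {ω | p n ω}) :
    Tendsto (fun m => P.real {ω | ∀ j < m, p j ω}) atTop (𝓝 (P.real {ω | ∀ j, p j ω})) := by
  have hanti : Antitone fun m => {ω | ∀ j < m, p j ω} :=
    fun m m' hm ω hω j hj => hω j (hj.trans_le hm)
  have hinter : ⋂ m, {ω | ∀ j < m, p j ω} = {ω | ∀ j, p j ω} := by
    ext ω
    simp only [Set.mem_iInter, Set.mem_ofPred_eq]
    exact ⟨fun h j => h (j + 1) j j.lt_add_one, fun h m j _ => h j⟩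
  have hmeas : ∀ m, MeasurableSet {ω | ∀ j < m, p j ω} := fun m => by
    simp only [Set.ofPred_forall]
    exact MeasurableSet.iInter fun j => MeasurableSet.iInter fun _ => hp j
  rw [← hinter]
  exact (ENNReal.tendsto_toReal (measure_ne_top _ _)).comp
    (tendsto_measure_iInter_atTop (fun m => (hmeas m).nullMeasurableSet) hanti
      ⟨0, measure_ne_top _ _⟩)

section RandomWalk

variable {Ω : Type*} [MeasurableSpace Ω] {P : Measure Ω} {ξ : ℕ → Ω → ℤ}

def walk (ξ : ℕ → Ω → ℤ) (ω : Ω) (n : ℕ) : ℤ := ∑ i ∈ range n, ξ i ω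

lemma measurable_walk (hmeas : ∀ n, Measurable (ξ n)) (n : ℕ) :
    Measurable fun ω => walk ξ ω n :=
  Finset.measurable_sum _ fun i _ => hmeas i

lemma measurableSet_isLadderEpoch (hmeas : ∀ n, Measurable (ξ n)) (n : ℕ) :
    MeasurableSet {ω | IsLadderEpoch (walk ξ ω) n} := by
  simp only [IsLadderEpoch, Set.ofPred_forall]
  exact MeasurableSet.iInter fun k => MeasurableSet.iInter fun _ =>
    measurableSet_lt (measurable_walk hmeas k) (measurable_walk hmeas n)

lemma measure_isLadderEpoch_eq (hmeas : ∀ n, Measurable (ξ n)) (hindep : iIndepFun ξ P)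
    (hident : ∀ n, IdentDistrib (ξ n) (ξ 0) P P) (n : ℕ) :
    P {ω | IsLadderEpoch (walk ξ ω) n} = P {ω | ∀ j < n, 1 ≤ walk ξ ω (j + 1)} := by
  let reflect : ℕ → ℕ := fun i => if i < n then n - 1 - i else i
  have hreflect : reflect.Injective := by
    intro i i' h
    simp only [reflect] at h
    split_ifs at h <;> omega
  let s : Set (ℕ → ℤ) := {x | ∀ j < n, 1 ≤ ∑ i ∈ range (j + 1), x i}
  have hs : MeasurableSet s := by
    simp only [s, Set.ofPred_forall]
    exact MeasurableSet.iInter fun j => MeasurableSet.iInter fun _ =>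
      (Finset.measurable_sum (range (j + 1)) fun i _ => measurable_pi_apply i) measurableSet_Ici
  have hladder : {ω | IsLadderEpoch (walk ξ ω) n} = (fun ω i => ξ (reflect i) ω) ⁻¹' s := by
    ext ω
    refine (isLadderEpoch_partialSums_iff (ξ · ω) n).trans (forall₂_congr fun j hj => ?_)
    rw [← Order.one_le_iff_pos]
    have hreflect_lt : ∀ i ∈ range (j + 1), ξ (reflect i) ω = ξ (n - 1 - i) ω := fun i hi => by
      rw [mem_range] at hi
      simp only [reflect, if_pos (show i < n by omega)]
    rw [sum_congr rfl hreflect_lt]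
  rw [hladder, (identDistrib_comp_of_injective hmeas hindep hident hreflect).measure_mem_eq hs]
  rfl

lemma ae_partialSups_walk_eq_card (hle : ∀ᵐ ω ∂P, ∀ i, ξ i ω ≤ 1) :
    ∀ᵐ ω ∂P, ∀ N, partialSups (walk ξ ω) N = #{n ∈ range N | IsLadderEpoch (walk ξ ω) (n + 1)} := by
  filter_upwards [hle] with ω hω N
  exact partialSups_eq_card_isLadderEpoch _ (sum_range_zero _)
    (fun i => by rw [walk, sum_range_succ]; exact add_le_add_right (hω i) _) N

lemma integral_partialSups_walk [IsFiniteMeasure P] (hmeas : ∀ n, Measurable (ξ n))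
    (hle : ∀ᵐ ω ∂P, ∀ i, ξ i ω ≤ 1) (N : ℕ) :
    ∫ ω, (partialSups (walk ξ ω) N : ℝ) ∂P
      = ∑ n ∈ range N, P.real {ω | IsLadderEpoch (walk ξ ω) (n + 1)} := by
  have hL := measurableSet_isLadderEpoch hmeas
  calc ∫ ω, (partialSups (walk ξ ω) N : ℝ) ∂P
      = ∫ ω, ∑ n ∈ range N, {ω | IsLadderEpoch (walk ξ ω) (n + 1)}.indicator 1 ω ∂P := by
        refine integral_congr_ae ?_
        filter_upwards [ae_partialSups_walk_eq_card hle] with ω hω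
        simp only [hω N, card_filter, Set.indicator_apply, Set.mem_ofPred_eq, Pi.one_apply]
        push_cast
        rfl
    _ = _ := by
        rw [integral_finsetSum _ fun n _ => (integrable_const 1).indicator (hL _)]
        simp_rw [integral_indicator_one (hL _)]

lemma ae_tendsto_walk_div (hindep : iIndepFun ξ P) (hident : ∀ n, IdentDistrib (ξ n) (ξ 0) P P)
    (hint : Integrable (fun ω => (ξ 0 ω : ℝ)) P) :
    ∀ᵐ ω ∂P, Tendsto (fun n : ℕ => (walk ξ ω n : ℝ) / n) atTop (𝓝 (∫ ω, (ξ 0 ω : ℝ) ∂P)) := by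
  have hindep' : Pairwise fun i j => IndepFun (fun ω => (ξ i ω : ℝ)) (fun ω => (ξ j ω : ℝ)) P :=
    fun i j hij => (hindep.indepFun hij).comp measurable_from_top measurable_from_top
  filter_upwards [strong_law_ae (fun i ω => (ξ i ω : ℝ)) hint hindep'
    fun i => (hident i).comp measurable_from_top] with ω hω
  simpa only [walk, smul_eq_mul, inv_mul_eq_div, Int.cast_sum] using hω

lemma tendsto_integral_partialSups_walk_div [IsProbabilityMeasure P]
    (hmeas : ∀ n, Measurable (ξ n)) (hle : ∀ᵐ ω ∂P, ∀ i, ξ i ω ≤ 1) {μ : ℝ} (hμ : 0 ≤ μ)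
    (hlim : ∀ᵐ ω ∂P, Tendsto (fun n : ℕ => (walk ξ ω n : ℝ) / n) atTop (𝓝 μ)) :
    Tendsto (fun N : ℕ => ∫ ω, (partialSups (walk ξ ω) N : ℝ) / N ∂P) atTop (𝓝 μ) := by
  have hcast : ∀ ω N, (partialSups (walk ξ ω) N : ℝ) = partialSups (fun k => (walk ξ ω k : ℝ)) N :=
    fun ω N => (map_partialSups (⟨Int.cast, Int.cast_mono⟩ : ℤ →o ℝ) _ N).symm
  have hmeasF : ∀ N : ℕ, AEStronglyMeasurable (fun ω => (partialSups (walk ξ ω) N : ℝ) / N) P := by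
    intro N
    have hmax : Measurable fun ω => partialSups (walk ξ ω) N := by
      simp_rw [partialSups_eq_sup'_range]
      exact Finset.measurable_range_sup'' fun k _ => measurable_walk hmeas k
    exact ((measurable_from_top.comp hmax).div_const _).aestronglyMeasurable
  have hbound : ∀ N : ℕ, ∀ᵐ ω ∂P, ‖(partialSups (walk ξ ω) N : ℝ) / N‖ ≤ 1 := fun N => by
    filter_upwards [ae_partialSups_walk_eq_card hle] with ω hω
    rw [hω N, Int.cast_natCast, norm_div, Real.norm_natCast, Real.norm_natCast]
    exact div_le_one_of_le₀ (mod_cast (card_filter_le _ _).trans (card_range N).le) N.cast_nonneg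
  have hlim' : ∀ᵐ ω ∂P, Tendsto (fun N : ℕ => (partialSups (walk ξ ω) N : ℝ) / N) atTop (𝓝 μ) := by
    filter_upwards [hlim] with ω hω
    simpa only [hcast] using tendsto_partialSups_div hμ hω
  simpa using tendsto_integral_of_dominated_convergence _ hmeasF (integrable_const 1) hbound hlim'

end RandomWalk

/-- For an upward skip-free random walk with i.i.d. integrable integer increments
bounded above by `1` and positive mean `μ`, the probability that the walk stays
at least `1` forever (i.e. `S_n ≥ 1` for all `n ≥ 1`) equals `μ`.
(Here the increments are indexed from `0`, so `S_n = ξ 0 + ⋯ + ξ (n-1)`.) -/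
theorem skip_free_ladder_probability (Ω : Type) [MeasureSpace Ω]
    [IsProbabilityMeasure (ℙ : Measure Ω)]
    (ξ : ℕ → Ω → ℤ) (hmeas : ∀ n, Measurable (ξ n))
    (hindep : iIndepFun ξ ℙ)
    (hident : ∀ n, IdentDistrib (ξ n) (ξ 0) ℙ ℙ)
    (hint : Integrable (fun ω => (ξ 0 ω : ℝ)) ℙ)
    (hbdd : ∀ᵐ ω ∂(ℙ : Measure Ω), ξ 0 ω ≤ 1)
    (μ : ℝ) (hμ : μ = ∫ ω, (ξ 0 ω : ℝ) ∂ℙ) (hμpos : 0 < μ) :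
    ℙ {ω : Ω | ∀ n : ℕ, 1 ≤ ∑ i ∈ Finset.range (n + 1), ξ i ω}
      = ENNReal.ofReal μ := by
  have hle : ∀ᵐ ω ∂ℙ, ∀ i, ξ i ω ≤ 1 :=
    ae_all_iff.2 fun i => (hident i).symm.ae_snd measurableSet_Iic hbdd
  have hstay := (tendsto_measureReal_forall_lt (P := ℙ)
    (p := fun n ω => 1 ≤ walk ξ ω (n + 1)) fun n =>
    measurable_walk hmeas (n + 1) measurableSet_Ici).comp (tendsto_add_atTop_nat 1)
  have hmax := tendsto_integral_partialSups_walk_div hmeas hle hμpos.le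
    (hμ ▸ ae_tendsto_walk_div hindep hident hint)
  have hcount : ∀ N : ℕ, ∫ ω, (partialSups (walk ξ ω) N : ℝ) / N ∂ℙ
      = (N : ℝ)⁻¹ * ∑ n ∈ range N,
          (ℙ : Measure Ω).real {ω | ∀ j < n + 1, 1 ≤ walk ξ ω (j + 1)} := by
    intro N
    rw [integral_div, integral_partialSups_walk hmeas hle, div_eq_inv_mul]
    simp_rw [measureReal_def, measure_isLadderEpoch_eq hmeas hindep hident]
  have hq := tendsto_nhds_unique hstay.cesaro
    (by simpa only [hcount, Function.comp_def] using hmax)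
  rw [← ofReal_measureReal]
  exact congrArg ENNReal.ofReal hq
end
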